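/- arXiv:1901.00386 — 5 statements merged into one kernel-verified Lean document; each statement's English description precedes it below -/
import Mathlib

section
/- Let X be a finite set and let W be a rate matrix on X (W_{x;x'} ≥ 0 for x ≠ x', Σ_x W_{x;x'} = 0 for every x') with symmetric support (for x ≠ x', W_{x;x'} > 0 iff W_{x';x} > 0). Let p be a strictly positive probability distribution on X and let ṗ_x = Σ_{x'} W_{x;x'} p(x') be the instantaneous change of p under the master equation. Then the instantaneous rate of change of the Shannon entropy, Σ_x ṗ_x (−ln p(x)), equals the entropy-production rate Σ_{x≠x'} W_{x;x'} p(x') ln( (W_{x;x'} p(x')) / (W_{x';x} p(x)) ) minus the entropy-flow rate Σ_{x≠x'} W_{x;x'} p(x') ln( W_{x;x'} / W_{x';x} ). -/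
/-- the rate of change of the Shannon entropy equals the
entropy-production rate minus the entropy-flow rate. -/
theorem entropy_rate_eq_ep_rate_sub_ef_rate
    {X : Type*} [Fintype X] [DecidableEq X]
    (W : X → X → ℝ) (p : X → ℝ)
    (hW : ∀ x x', x ≠ x' → 0 ≤ W x x')
    (hWcol : ∀ x', ∑ x, W x x' = 0)
    (hWsym : ∀ x x', x ≠ x' → (0 < W x x' ↔ 0 < W x' x))
    (hp : ∀ x, 0 < p x) (hpsum : ∑ x, p x = 1) :
    ∑ x, (∑ x', W x x' * p x') * (-Real.log (p x)) =
      (∑ x, ∑ x', if x = x' then 0 else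
        W x x' * p x' * Real.log ((W x x' * p x') / (W x' x * p x)))
      - (∑ x, ∑ x', if x = x' then 0 else
        W x x' * p x' * Real.log (W x x' / W x' x)) := by
  classical
  have key : ∀ x x', (if x = x' then 0 else
        W x x' * p x' * Real.log ((W x x' * p x') / (W x' x * p x)))
      - (if x = x' then 0 else
        W x x' * p x' * Real.log (W x x' / W x' x))
      = W x x' * p x' * (Real.log (p x') - Real.log (p x)) := by
    intro x x'
    by_cases h : x = x'
    · simp [h]
    · simp only [if_neg h]
      rcases eq_or_lt_of_le (hW x x' h) with h0 | h0
      · simp [← h0]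
      · have h1 : 0 < W x' x := (hWsym x x' h).mp h0
        rw [Real.log_div (mul_pos h0 (hp x')).ne' (mul_pos h1 (hp x)).ne',
            Real.log_div h0.ne' h1.ne',
            Real.log_mul h0.ne' (hp x').ne',
            Real.log_mul h1.ne' (hp x).ne']
        ring
  rw [← Finset.sum_sub_distrib]
  simp_rw [← Finset.sum_sub_distrib, key, mul_sub, Finset.sum_sub_distrib]
  have h1 : ∑ x : X, ∑ x' : X, W x x' * p x' * Real.log (p x') = 0 := by
    rw [Finset.sum_comm]
    simp_rw [mul_assoc, ← Finset.sum_mul, hWcol, zero_mul, Finset.sum_const_zero]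
  rw [h1, zero_sub, ← Finset.sum_neg_distrib]
  refine Finset.sum_congr rfl fun x _ => ?_
  rw [mul_neg, Finset.sum_mul, ← Finset.sum_neg_distrib]
end

section
/- Let X be a finite set and let t ↦ W(t), t ∈ [0,1], be a continuous family of rate matrices on X with symmetric support at every time. Let p(·) be a solution of the master equation dp_x(t)/dt = Σ_{x'} W_{x;x'}(t) p_{x'}(t) with p(t) a strictly positive probability distribution for all t ∈ [0,1], and assume the entropy-flow rate is integrable on [0,1]. Then the total entropy flow Q = ∫_0^1 Σ_{x≠x'} W_{x;x'}(t) p_{x'}(t) ln( W_{x;x'}(t) / W_{x';x}(t) ) dt satisfies the generalized Landauer bound Q ≥ S(p(0)) − S(p(1)). -/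
/-!
Differentiating the Shannon entropy along the master equation gives
`-dS/dt = ∑ₓ ṗₓ (log pₓ + 1) = ∑_{x ≠ x'} W_{x;x'} p_{x'} (log pₓ - log p_{x'})`, the constant
dropping out because the columns of `W` sum to zero. Subtracting this from the entropy flow
leaves the entropy production `∑_{x ≠ x'} u_{xx'} log (u_{xx'} / u_{x'x})` with
`u_{xx'} = W_{x;x'} p_{x'}`, which is at least `∑ (u_{xx'} - u_{x'x}) = 0` by
`u log (u / v) ≥ u - v`. Integrating `-dS/dt ≤ Q̇` over `[0, 1]` gives the bound.
-/

open MeasureTheory Real Set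

section

variable {X : Type*} [Fintype X]

noncomputable def shannonEntropy (q : X → ℝ) : ℝ := ∑ x, negMulLog (q x)

noncomputable def entropyFlow [DecidableEq X] (w : X → X → ℝ) (q : X → ℝ) : ℝ :=
  ∑ x, ∑ x', if x = x' then 0 else w x x' * q x' * log (w x x' / w x' x)

theorem shannonEntropy_eq (q : X → ℝ) : shannonEntropy q = -∑ x, q x * log (q x) := by
  simp only [shannonEntropy, negMulLog, neg_mul, Finset.sum_neg_distrib]

theorem hasDerivWithinAt_shannonEntropy {q : ℝ → X → ℝ} {q' : X → ℝ} {s : Set ℝ} {t : ℝ}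
    (hq : ∀ x, HasDerivWithinAt (fun τ => q τ x) (q' x) s t) (hne : ∀ x, q t x ≠ 0) :
    HasDerivWithinAt (fun τ => shannonEntropy (q τ)) (-∑ x, q' x * (log (q t x) + 1)) s t := by
  have hx : ∀ x ∈ Finset.univ, HasDerivWithinAt (fun τ => negMulLog (q τ x))
      ((-log (q t x) - 1) * q' x) s t :=
    fun x _ => by exact (hasDerivAt_negMulLog (hne x)).comp_hasDerivWithinAt t (hq x)
  refine (HasDerivWithinAt.fun_sum hx).congr_deriv ?_
  rw [← Finset.sum_neg_distrib]
  exact Finset.sum_congr rfl fun x _ => by ring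

theorem sub_le_mul_log_div {u v : ℝ} (hu : 0 ≤ u) (hv : 0 ≤ v) (huv : 0 < u → 0 < v) :
    u - v ≤ u * log (u / v) := by
  rcases hu.eq_or_lt with rfl | hu
  · simpa using hv
  have hv := huv hu
  have h := one_sub_inv_le_log_of_pos (div_pos hu hv)
  rw [inv_div] at h
  calc u - v = u * (1 - v / u) := by field_simp
    _ ≤ u * log (u / v) := mul_le_mul_of_nonneg_left h hu.le

theorem sum_mul_eq_sum_sum_mul_sub_of_sum_col_eq_zero {w : X → X → ℝ}
    (hcol : ∀ x', ∑ x, w x x' = 0) (q g : X → ℝ) :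
    ∑ x, (∑ x', w x x' * q x') * g x = ∑ x, ∑ x', w x x' * q x' * (g x - g x') := by
  have hzero : ∑ x, ∑ x', w x x' * q x' * g x' = 0 := by
    rw [Finset.sum_comm]
    refine Finset.sum_eq_zero fun x' _ => ?_
    rw [← Finset.sum_mul, ← Finset.sum_mul, hcol, zero_mul, zero_mul]
  simp only [mul_sub, Finset.sum_sub_distrib, hzero, sub_zero, Finset.sum_mul]

theorem sum_sum_sub_swap_eq_zero (F : X → X → ℝ) : ∑ x, ∑ x', (F x x' - F x' x) = 0 := by
  simp only [Finset.sum_sub_distrib]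
  rw [Finset.sum_comm, sub_self]

theorem sum_mul_log_add_one_le_entropyFlow [DecidableEq X] {w : X → X → ℝ} {q : X → ℝ}
    (hoff : ∀ x x', x ≠ x' → 0 ≤ w x x') (hcol : ∀ x', ∑ x, w x x' = 0)
    (hsupp : ∀ x x', x ≠ x' → 0 < w x x' → 0 < w x' x) (hq : ∀ x, 0 < q x) :
    ∑ x, (∑ x', w x x' * q x') * (log (q x) + 1) ≤ entropyFlow w q := by
  have hterm : ∀ x x', w x x' * q x' * (log (q x) - log (q x'))
      + (w x x' * q x' - w x' x * q x)
      ≤ if x = x' then 0 else w x x' * q x' * log (w x x' / w x' x) := by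
    intro x x'
    by_cases hxx' : x = x'
    · simp [hxx']
    rw [if_neg hxx']
    have hw := hoff x x' hxx'
    rcases hw.eq_or_lt with hw0 | hwpos
    · simpa [← hw0] using mul_nonneg (hoff x' x (Ne.symm hxx')) (hq x).le
    have hw' := hsupp x x' hxx' hwpos
    have hu := mul_pos hwpos (hq x')
    have hv := mul_pos hw' (hq x)
    have hlog : log (w x x' * q x' / (w x' x * q x))
        = log (w x x' / w x' x) + (log (q x') - log (q x)) := by
      rw [log_div hu.ne' hv.ne', log_div hwpos.ne' hw'.ne', log_mul hwpos.ne' (hq x').ne',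
        log_mul hw'.ne' (hq x).ne']
      ring
    have h := sub_le_mul_log_div hu.le hv.le fun _ => hv
    rw [hlog] at h
    linarith
  calc ∑ x, (∑ x', w x x' * q x') * (log (q x) + 1)
      = ∑ x, ∑ x', (w x x' * q x' * (log (q x) - log (q x'))
          + (w x x' * q x' - w x' x * q x)) := by
        rw [sum_mul_eq_sum_sum_mul_sub_of_sum_col_eq_zero hcol]
        simp only [Finset.sum_add_distrib, sum_sum_sub_swap_eq_zero fun x x' => w x x' * q x',
          add_zero, add_sub_add_right_eq_sub]
    _ ≤ entropyFlow w q := Finset.sum_le_sum fun x _ => Finset.sum_le_sum fun x' _ => hterm x x'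

end

theorem generalized_landauer_bound_general
    {X : Type*} [Fintype X] [DecidableEq X]
    (W : ℝ → X → X → ℝ) (p : ℝ → X → ℝ)
    (hWoff : ∀ t ∈ Set.Icc (0:ℝ) 1, ∀ x x', x ≠ x' → 0 ≤ W t x x')
    (hWcol : ∀ t ∈ Set.Icc (0:ℝ) 1, ∀ x', ∑ x, W t x x' = 0)
    (hWsym : ∀ t ∈ Set.Icc (0:ℝ) 1, ∀ x x', x ≠ x' → (0 < W t x x' ↔ 0 < W t x' x))
    (hode : ∀ t ∈ Set.Icc (0:ℝ) 1, ∀ x,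
      HasDerivWithinAt (fun s => p s x) (∑ x', W t x x' * p t x') (Set.Icc 0 1) t)
    (hpos : ∀ t ∈ Set.Icc (0:ℝ) 1, ∀ x, 0 < p t x)
    (hint : IntervalIntegrable (fun t => ∑ x, ∑ x', if x = x' then 0 else
        W t x x' * p t x' * Real.log (W t x x' / W t x' x)) volume 0 1) :
    (-∑ x, p 0 x * Real.log (p 0 x)) - (-∑ x, p 1 x * Real.log (p 1 x)) ≤
      ∫ t in (0:ℝ)..1, ∑ x, ∑ x', if x = x' then 0 else
        W t x x' * p t x' * Real.log (W t x x' / W t x' x) := by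
  have hS : ∀ t ∈ Icc (0:ℝ) 1, HasDerivWithinAt (fun s => -shannonEntropy (p s))
      (∑ x, (∑ x', W t x x' * p t x') * (log (p t x) + 1)) (Icc 0 1) t := fun t ht => by
    simpa using (hasDerivWithinAt_shannonEntropy (hode t ht) fun x => (hpos t ht x).ne').fun_neg
  have hflow : ∀ t ∈ Ioo (0:ℝ) 1,
      ∑ x, (∑ x', W t x x' * p t x') * (log (p t x) + 1) ≤ entropyFlow (W t) (p t) :=
    fun t ht => have ht := Ioo_subset_Icc_self ht
      sum_mul_log_add_one_le_entropyFlow (hWoff t ht) (hWcol t ht)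
        (fun x x' h => (hWsym t ht x x' h).mp) (hpos t ht)
  have hbound := intervalIntegral.sub_le_integral_of_hasDeriv_right_of_le zero_le_one
    (fun t ht => (hS t ht).continuousWithinAt)
    (fun t ht => (hS t (Ioo_subset_Icc_self ht)).mono_of_mem_nhdsWithin
      (Icc_mem_nhdsGT_of_mem ⟨ht.1.le, ht.2⟩))
    ((intervalIntegrable_iff_integrableOn_Icc_of_le zero_le_one).mp hint) hflow
  simp only [shannonEntropy_eq, neg_neg] at hbound
  linarith

/-- the generalized Landauer bound: the total entropy flow is at
least the drop in Shannon entropy from time 0 to time 1. -/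
theorem generalized_landauer_bound
    {X : Type*} [Fintype X] [DecidableEq X]
    (W : ℝ → X → X → ℝ) (p : ℝ → X → ℝ)
    (hWcont : ∀ x x', ContinuousOn (fun t => W t x x') (Set.Icc 0 1))
    (hWoff : ∀ t ∈ Set.Icc (0:ℝ) 1, ∀ x x', x ≠ x' → 0 ≤ W t x x')
    (hWcol : ∀ t ∈ Set.Icc (0:ℝ) 1, ∀ x', ∑ x, W t x x' = 0)
    (hWsym : ∀ t ∈ Set.Icc (0:ℝ) 1, ∀ x x', x ≠ x' → (0 < W t x x' ↔ 0 < W t x' x))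
    (hode : ∀ t ∈ Set.Icc (0:ℝ) 1, ∀ x,
      HasDerivWithinAt (fun s => p s x) (∑ x', W t x x' * p t x') (Set.Icc 0 1) t)
    (hpos : ∀ t ∈ Set.Icc (0:ℝ) 1, ∀ x, 0 < p t x)
    (hdist : ∀ t ∈ Set.Icc (0:ℝ) 1, ∑ x, p t x = 1)
    (hint : IntervalIntegrable (fun t => ∑ x, ∑ x', if x = x' then 0 else
        W t x x' * p t x' * Real.log (W t x x' / W t x' x)) volume 0 1) :
    (-∑ x, p 0 x * Real.log (p 0 x)) - (-∑ x, p 1 x * Real.log (p 1 x)) ≤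
      ∫ t in (0:ℝ)..1, ∑ x, ∑ x', if x = x' then 0 else
        W t x x' * p t x' * Real.log (W t x x' / W t x' x) :=
  generalized_landauer_bound_general W p hWoff hWcol hWsym hode hpos hint
end

section
/- Let X be a finite set, π a stochastic matrix on X, and L(π) the set of islands of π. Let p and q be probability distributions on X such that for every island c with p(c) > 0 one has q(c) > 0 and the conditional distributions agree: p^c = q^c (and supp p ⊆ supp q). Then the mismatch cost vanishes: D(p‖q) − D(πp‖πq) = 0. -/
/-!
On each island `c` with `p(c) > 0` the matching hypothesis says `p = (p(c) / q(c)) • q`, so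
`p = λ · q` for a function `λ` constant on islands. If `π(y|x) ≠ 0 ≠ π(y|x')` then `x` and
`x'` lie on one island, so `πp = λ · πq` with the same constants, and both divergences equal
`∑ₓ p(x) log λ(x)`: for `πp` this follows by expanding `(πp)(y)` and summing the rows of `π`.
-/

/-- The relation whose equivalence classes (under transitive/equivalence
closure) are the islands of the stochastic matrix `π`:
`x ~ x'` iff there is `x''` with `π(x''|x) > 0` and `π(x''|x') > 0`. -/
def islandRel {X : Type*} (π : X → X → ℝ) (a b : X) : Prop :=
  ∃ z, 0 < π a z ∧ 0 < π b z

/-- The island of `π` containing `x0`. -/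
def islandOf {X : Type*} (π : X → X → ℝ) (x0 : X) : Set X :=
  {x | Relation.EqvGen (islandRel π) x x0}

/-- KL divergence between two distributions on a finite set. -/
noncomputable def klDiv' {X : Type*} [Fintype X] (p q : X → ℝ) : ℝ :=
  ∑ x, p x * Real.log (p x / q x)

open Finset

lemma klDiv'_eq_sum_mul_log_of_eq_mul {X : Type*} [Fintype X] {p q f : X → ℝ}
    (hpq : ∀ x, p x = f x * q x) : klDiv' p q = ∑ x, p x * Real.log (f x) := by
  refine sum_congr rfl fun x _ => ?_
  by_cases hqx : q x = 0
  · simp [hpq x, hqx]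
  · rw [hpq x, mul_div_cancel_right₀ _ hqx]

lemma klDiv'_pushforward_eq_sum_mul_log {X : Type*} [Fintype X] {π : X → X → ℝ}
    {p q f : X → ℝ} (hrow : ∀ x, ∑ y, π x y = 1) (hpq : ∀ x, p x = f x * q x)
    (hf : ∀ x x' y, π x y ≠ 0 → π x' y ≠ 0 → f x = f x') :
    klDiv' (fun y => ∑ x, π x y * p x) (fun y => ∑ x, π x y * q x) =
      ∑ x, p x * Real.log (f x) := by
  have hcol : ∀ y, ∃ c, ∀ x, π x y ≠ 0 → f x = c := by
    intro y
    by_cases h : ∃ x, π x y ≠ 0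
    · obtain ⟨x₀, hx₀⟩ := h
      exact ⟨f x₀, fun x hx => hf x x₀ y hx hx₀⟩
    · exact ⟨0, fun x hx => absurd ⟨x, hx⟩ h⟩
  choose g hg using hcol
  have hterm : ∀ x y, π x y * p x * Real.log (g y) = π x y * p x * Real.log (f x) := by
    intro x y
    by_cases hxy : π x y = 0
    · simp [hxy]
    · rw [hg y x hxy]
  calc klDiv' (fun y => ∑ x, π x y * p x) (fun y => ∑ x, π x y * q x)
      = ∑ y, (∑ x, π x y * p x) * Real.log (g y) := by
        refine klDiv'_eq_sum_mul_log_of_eq_mul fun y => ?_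
        rw [mul_sum]
        refine sum_congr rfl fun x _ => ?_
        by_cases hxy : π x y = 0
        · simp [hxy]
        · rw [hpq x, hg y x hxy]
          ring
    _ = ∑ x, ∑ y, π x y * p x * Real.log (f x) := by
        simp_rw [sum_mul, hterm]
        exact sum_comm
    _ = ∑ x, p x * Real.log (f x) := by
        refine sum_congr rfl fun x _ => ?_
        rw [← sum_mul, ← sum_mul, hrow, one_mul]

section Islands

variable {X : Type*} (π : X → X → ℝ)

lemma mem_islandOf_self (x : X) : x ∈ islandOf π x :=
  Relation.EqvGen.refl x

lemma islandOf_eq_of_islandRel {a b : X} (h : islandRel π a b) :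
    islandOf π a = islandOf π b := by
  ext z
  exact ⟨fun hz => hz.trans _ _ _ (.rel _ _ h), fun hz => hz.trans _ _ _ (.symm _ _ (.rel _ _ h))⟩

variable [Fintype X]

noncomputable def islandMass (p : X → ℝ) (x₀ : X) : ℝ :=
  ∑ x, (islandOf π x₀).indicator p x

lemma le_islandMass_self {p : X → ℝ} (hp : ∀ x, 0 ≤ p x) (x : X) : p x ≤ islandMass π p x := by
  have h := single_le_sum (f := (islandOf π x).indicator p)
    (fun y _ => Set.indicator_nonneg (fun z _ => hp z) y) (mem_univ x)
  rwa [Set.indicator_of_mem (mem_islandOf_self π x)] at h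

lemma islandMass_eq_of_islandRel (p : X → ℝ) {a b : X} (h : islandRel π a b) :
    islandMass π p a = islandMass π p b := by
  rw [islandMass, islandMass, islandOf_eq_of_islandRel π h]

lemma eq_islandMass_div_mul {p q : X → ℝ} (hp : ∀ x, 0 ≤ p x)
    (hmatch : ∀ x₀, 0 < islandMass π p x₀ →
      0 < islandMass π q x₀ ∧
        ∀ x ∈ islandOf π x₀, p x * islandMass π q x₀ = q x * islandMass π p x₀)
    (x : X) : p x = islandMass π p x / islandMass π q x * q x := by
  by_cases hP : 0 < islandMass π p x
  · obtain ⟨hQ, hprop⟩ := hmatch x hP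
    rw [div_mul_eq_mul_div, eq_div_iff hQ.ne']
    linarith [hprop x (mem_islandOf_self π x)]
  · have hP0 : islandMass π p x = 0 :=
      le_antisymm (not_lt.1 hP) ((hp x).trans (le_islandMass_self π hp x))
    have hpx : p x = 0 := le_antisymm (hP0 ▸ le_islandMass_self π hp x) (hp x)
    simp [hpx, hP0]

end Islands

theorem mismatch_cost_zero_matched_prior_general
    {X : Type*} [Fintype X]
    (π : X → X → ℝ) (p q : X → ℝ)
    (hπ : ∀ x y, 0 ≤ π x y) (hπrow : ∀ x, ∑ y, π x y = 1)
    (hp : ∀ x, 0 ≤ p x)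
    (hmatch : ∀ x0 : X,
      0 < ∑ x, (islandOf π x0).indicator p x →
        0 < ∑ x, (islandOf π x0).indicator q x ∧
        ∀ x ∈ islandOf π x0,
          p x * (∑ y, (islandOf π x0).indicator q y) =
            q x * (∑ y, (islandOf π x0).indicator p y)) :
    klDiv' p q
      - klDiv' (fun y => ∑ x, π x y * p x) (fun y => ∑ x, π x y * q x) = 0 := by
  set f : X → ℝ := fun x => islandMass π p x / islandMass π q x
  have hpq : ∀ x, p x = f x * q x := eq_islandMass_div_mul π hp hmatch
  have hf : ∀ x x' y, π x y ≠ 0 → π x' y ≠ 0 → f x = f x' := by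
    intro x x' y hx hx'
    have h : islandRel π x x' := ⟨y, (hπ x y).lt_of_ne' hx, (hπ x' y).lt_of_ne' hx'⟩
    simp only [f, islandMass_eq_of_islandRel π p h, islandMass_eq_of_islandRel π q h]
  rw [klDiv'_eq_sum_mul_log_of_eq_mul hpq, klDiv'_pushforward_eq_sum_mul_log hπrow hpq hf,
    sub_self]

/-- if on every island `c` with `p(c) > 0` one has `q(c) > 0` and
`p^c = q^c`, then the mismatch cost `D(p‖q) − D(πp‖πq)` vanishes. -/
theorem mismatch_cost_zero_matched_prior
    {X : Type*} [Fintype X]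
    (π : X → X → ℝ) (p q : X → ℝ)
    (hπ : ∀ x y, 0 ≤ π x y) (hπrow : ∀ x, ∑ y, π x y = 1)
    (hp : ∀ x, 0 ≤ p x) (hpsum : ∑ x, p x = 1)
    (hq : ∀ x, 0 ≤ q x) (hqsum : ∑ x, q x = 1)
    (hsupp : ∀ x, q x = 0 → p x = 0)
    (hmatch : ∀ x0 : X,
      0 < ∑ x, (islandOf π x0).indicator p x →
        0 < ∑ x, (islandOf π x0).indicator q x ∧
        ∀ x ∈ islandOf π x0,
          p x * (∑ y, (islandOf π x0).indicator q y) =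
            q x * (∑ y, (islandOf π x0).indicator p y)) :
    klDiv' p q
      - klDiv' (fun y => ∑ x, π x y * p x) (fun y => ∑ x, π x y * q x) = 0 :=
  mismatch_cost_zero_matched_prior_general π p q hπ hπrow hp hmatch
end

section
/- Let X be a finite set, π a stochastic matrix on X with island set L(π), and for each island c ∈ L(π) let q^c be a probability distribution supported in c. Let w and w' be two probability distributions over L(π), and set q = Σ_c w(c) q^c and q' = Σ_c w'(c) q^c. Then for every probability distribution p on X such that for each island c with p(c) > 0 one has w(c) > 0, w'(c) > 0, and supp p^c ⊆ supp q^c, the drop in KL divergence is independent of the island weights: D(p‖q) − D(πp‖πq) = D(p‖q') − D(πp‖πq'). -/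
/-- the drop in KL divergence to a prior built from fixed
island-distributions `q^c` does not depend on the island weights.  Here `R` is
a set of representatives, one for each island of `π`. -/
theorem mismatch_cost_independent_of_island_weights
    {X : Type*} [Fintype X]
    (π : X → X → ℝ)
    (hπ : ∀ x y, 0 ≤ π x y) (hπrow : ∀ x, ∑ y, π x y = 1)
    (R : Finset X) (hR : ∀ x : X, ∃! r, r ∈ R ∧ x ∈ islandOf π r)
    (qc : X → X → ℝ)
    (hqc_nonneg : ∀ r ∈ R, ∀ x, 0 ≤ qc r x)
    (hqc_sum : ∀ r ∈ R, ∑ x, qc r x = 1)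
    (hqc_supp : ∀ r ∈ R, ∀ x, qc r x ≠ 0 → x ∈ islandOf π r)
    (w w' : X → ℝ)
    (hw_nonneg : ∀ r ∈ R, 0 ≤ w r) (hw_sum : ∑ r ∈ R, w r = 1)
    (hw'_nonneg : ∀ r ∈ R, 0 ≤ w' r) (hw'_sum : ∑ r ∈ R, w' r = 1)
    (p : X → ℝ) (hp : ∀ x, 0 ≤ p x) (hpsum : ∑ x, p x = 1)
    (hpc : ∀ r ∈ R, 0 < ∑ x, (islandOf π r).indicator p x →
      0 < w r ∧ 0 < w' r ∧ ∀ x ∈ islandOf π r, qc r x = 0 → p x = 0) :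
    klDiv' p (fun x => ∑ r ∈ R, w r * qc r x)
      - klDiv' (fun y => ∑ x, π x y * p x)
          (fun y => ∑ x, π x y * (∑ r ∈ R, w r * qc r x))
    = klDiv' p (fun x => ∑ r ∈ R, w' r * qc r x)
      - klDiv' (fun y => ∑ x, π x y * p x)
          (fun y => ∑ x, π x y * (∑ r ∈ R, w' r * qc r x)) := by
  classical
  choose rep hrep using hR
  have hrepR : ∀ x, rep x ∈ R := fun x => (hrep x).1.1
  have hrepMem : ∀ x, x ∈ islandOf π (rep x) := fun x => (hrep x).1.2
  have hrepU : ∀ x r, r ∈ R → x ∈ islandOf π r → r = rep x :=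
    fun x r h1 h2 => (hrep x).2 r ⟨h1, h2⟩
  -- two points feeding the same output are in the same island
  have hsame : ∀ x x' y, 0 < π x y → 0 < π x' y → rep x = rep x' := by
    intro x x' y hx hx'
    have h1 : Relation.EqvGen (islandRel π) x x' :=
      Relation.EqvGen.rel _ _ ⟨y, hx, hx'⟩
    have hmem : x ∈ islandOf π (rep x') :=
      Relation.EqvGen.trans _ _ _ h1 (hrepMem x')
    exact (hrepU x (rep x') (hrepR x') hmem).symm
  -- off-island components vanish
  have hQonly : ∀ x r, r ∈ R → r ≠ rep x → qc r x = 0 := by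
    intro x r hr hne
    by_contra h
    exact hne (hrepU x r hr (hqc_supp r hr x h))
  -- the mixture collapses on each island
  have hQ : ∀ (v : X → ℝ) (x : X),
      ∑ r ∈ R, v r * qc r x = v (rep x) * qc (rep x) x := by
    intro v x
    refine Finset.sum_eq_single_of_mem (rep x) (hrepR x) ?_
    intro r hr hne
    rw [hQonly x r hr hne, mul_zero]
  -- positivity on the support of p
  have hpos : ∀ x, p x ≠ 0 → 0 < w (rep x) ∧ 0 < w' (rep x) ∧ 0 < qc (rep x) x := by
    intro x hx
    have hpx : 0 < p x := (hp x).lt_of_ne (Ne.symm hx)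
    have hP : 0 < ∑ z, (islandOf π (rep x)).indicator p z := by
      have hle : p x ≤ ∑ z, (islandOf π (rep x)).indicator p z := by
        have := Finset.single_le_sum
          (f := (islandOf π (rep x)).indicator p)
          (fun z _ => Set.indicator_nonneg (fun z _ => hp z) z)
          (Finset.mem_univ x)
        rwa [Set.indicator_of_mem (hrepMem x)] at this
      linarith
    obtain ⟨h1, h2, h3⟩ := hpc (rep x) (hrepR x) hP
    refine ⟨h1, h2, ?_⟩
    rcases (hqc_nonneg (rep x) (hrepR x) x).lt_or_eq with h | h
    · exact h
    · exact absurd (h3 x (hrepMem x) h.symm) hx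
  -- the first KL difference
  have keyA : klDiv' p (fun x => ∑ r ∈ R, w r * qc r x)
      - klDiv' p (fun x => ∑ r ∈ R, w' r * qc r x)
      = ∑ x, p x * (Real.log (w' (rep x)) - Real.log (w (rep x))) := by
    simp only [klDiv']
    rw [← Finset.sum_sub_distrib]
    apply Finset.sum_congr rfl
    intro x _
    rcases eq_or_ne (p x) 0 with h | h
    · simp [h]
    · obtain ⟨hw1, hw2, hq1⟩ := hpos x h
      have hpx : 0 < p x := (hp x).lt_of_ne (Ne.symm h)
      rw [hQ w x, hQ w' x,
        Real.log_div (ne_of_gt hpx) (by positivity),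
        Real.log_div (ne_of_gt hpx) (by positivity),
        Real.log_mul (ne_of_gt hw1) (ne_of_gt hq1),
        Real.log_mul (ne_of_gt hw2) (ne_of_gt hq1)]
      ring
  -- the second KL difference
  have keyB : klDiv' (fun y => ∑ x, π x y * p x)
        (fun y => ∑ x, π x y * (∑ r ∈ R, w r * qc r x))
      - klDiv' (fun y => ∑ x, π x y * p x)
        (fun y => ∑ x, π x y * (∑ r ∈ R, w' r * qc r x))
      = ∑ x, p x * (Real.log (w' (rep x)) - Real.log (w (rep x))) := by
    have hswap : ∑ y, ∑ x, π x y * p x * (Real.log (w' (rep x)) - Real.log (w (rep x)))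
        = ∑ x, p x * (Real.log (w' (rep x)) - Real.log (w (rep x))) := by
      rw [Finset.sum_comm]
      apply Finset.sum_congr rfl
      intro x _
      simp only [mul_assoc]
      rw [← Finset.sum_mul, hπrow x, one_mul]
    simp only [klDiv']
    rw [← Finset.sum_sub_distrib, ← hswap]
    apply Finset.sum_congr rfl
    intro y _
    rcases eq_or_ne (∑ x, π x y * p x) 0 with h | h
    · have hz : ∀ x ∈ Finset.univ, π x y * p x = 0 :=
        (Finset.sum_eq_zero_iff_of_nonneg
          (fun x _ => mul_nonneg (hπ x y) (hp x))).mp h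
      rw [h]
      simp only [zero_mul, sub_zero]
      rw [eq_comm]
      exact Finset.sum_eq_zero fun x hx => by rw [hz x hx, zero_mul]
    · obtain ⟨x0, -, hx0⟩ := Finset.exists_ne_zero_of_sum_ne_zero h
      have hπ0 : 0 < π x0 y :=
        lt_of_le_of_ne (hπ x0 y) (Ne.symm fun hh => hx0 (by rw [hh, zero_mul]))
      have hp0 : p x0 ≠ 0 := fun hh => hx0 (by rw [hh, mul_zero])
      obtain ⟨hw1, hw2, hq1⟩ := hpos x0 hp0
      have hrepx : ∀ x, 0 < π x y → rep x = rep x0 :=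
        fun x hx => hsame x x0 y hx hπ0
      have hQπ : ∀ v : X → ℝ,
          (∑ x, π x y * ∑ r' ∈ R, v r' * qc r' x)
            = v (rep x0) * ∑ x, π x y * qc (rep x0) x := by
        intro v
        rw [Finset.mul_sum]
        apply Finset.sum_congr rfl
        intro x _
        rw [hQ v x]
        rcases eq_or_ne (π x y) 0 with h0 | h0
        · rw [h0]; ring
        · rw [hrepx x (lt_of_le_of_ne (hπ x y) (Ne.symm h0))]; ring
      have hS : 0 < ∑ x, π x y * qc (rep x0) x := by
        apply Finset.sum_pos'
          (fun x _ => mul_nonneg (hπ x y) (hqc_nonneg _ (hrepR x0) x))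
        exact ⟨x0, Finset.mem_univ x0, mul_pos hπ0 hq1⟩
      have hPp : 0 < ∑ x, π x y * p x :=
        lt_of_le_of_ne (Finset.sum_nonneg fun x _ => mul_nonneg (hπ x y) (hp x))
          (Ne.symm h)
      have hRHS : ∑ x, π x y * p x * (Real.log (w' (rep x)) - Real.log (w (rep x)))
          = (∑ x, π x y * p x) * (Real.log (w' (rep x0)) - Real.log (w (rep x0))) := by
        rw [Finset.sum_mul]
        apply Finset.sum_congr rfl
        intro x _
        rcases eq_or_ne (π x y) 0 with h0 | h0
        · rw [h0]; ring
        · rw [hrepx x (lt_of_le_of_ne (hπ x y) (Ne.symm h0))]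
      rw [hQπ w, hQπ w', hRHS,
        Real.log_div (ne_of_gt hPp) (by positivity),
        Real.log_div (ne_of_gt hPp) (by positivity),
        Real.log_mul (ne_of_gt hw1) (ne_of_gt hS),
        Real.log_mul (ne_of_gt hw2) (ne_of_gt hS)]
      ring
  linarith [keyA, keyB]
end

section
/- Let X be a finite set and t ↦ W(t), t ∈ [0,1], a continuous family of rate matrices on X with symmetric support, such that for every initial probability distribution p₀ the master equation has a strictly positive solution on (0,1] with p(0) = p₀, with finite total entropy flow Q(p₀) and finite total entropy production σ(p₀). Let π be the induced transition matrix (πp₀ = p(1)). For each island c of π let q^c be a minimizer of σ among distributions supported in c, with minimal value σ_min(c), and set q = Σ_c w(c) q^c for any strictly positive island weights w; assume supp p₀^c ⊆ supp q^c for every island c with p₀(c) > 0. Then the total entropy flow incurred in applying π to p₀ satisfies Q(p₀) = [S(p₀) − S(πp₀)] + [D(p₀‖q) − D(πp₀‖πq)] + Σ_{c∈L(π)} p₀(c) σ_min(c) = [K(p₀‖q) − K(πp₀‖πq)] + Σ_{c∈L(π)} p₀(c) σ_min(c). -/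
open MeasureTheory

/-- A probability distribution on a finite set. -/
def IsDist {X : Type*} [Fintype X] (p : X → ℝ) : Prop :=
  (∀ x, 0 ≤ p x) ∧ ∑ x, p x = 1

/-- Shannon entropy of a distribution on a finite set. -/
noncomputable def shannonH {X : Type*} [Fintype X] (p : X → ℝ) : ℝ :=
  -∑ x, p x * Real.log (p x)

/-- Cross entropy between two distributions on a finite set. -/
noncomputable def crossEnt {X : Type*} [Fintype X] (p q : X → ℝ) : ℝ :=
  -∑ x, p x * Real.log (q x)

/-- The entropy-flow rate at time `t` along the trajectory `p`. -/
noncomputable def efRate {X : Type*} [Fintype X] [DecidableEq X]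
    (W : ℝ → X → X → ℝ) (p : ℝ → X → ℝ) (t : ℝ) : ℝ :=
  ∑ x, ∑ x', if x = x' then 0 else
    W t x x' * p t x' * Real.log (W t x x' / W t x' x)

/-- The entropy-production rate at time `t` along the trajectory `p`. -/
noncomputable def epRate {X : Type*} [Fintype X] [DecidableEq X]
    (W : ℝ → X → X → ℝ) (p : ℝ → X → ℝ) (t : ℝ) : ℝ :=
  ∑ x, ∑ x', if x = x' then 0 else
    W t x x' * p t x' * Real.log ((W t x x' * p t x') / (W t x' x * p t x))


/-! The entropy flow `Q` is affine in the initial distribution, because the master equation is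
linear, and so is the drop in cross entropy `K(p‖q) - K(πp‖πq)`; hence so is their difference
`Λ(p) = Q(p) - [K(p‖q) - K(πp‖πq)]`. Integrating `dS/dt = σ̇ - Q̇` along the trajectory gives
`σ(p) = Q(p) + S(πp) - S(p)`. For `p` supported in the support of `qᶜ`, where `q = w(c) qᶜ` and
`πq = w(c) πqᶜ`, this turns into `Λ(p) = σ(p) - D(p‖qᶜ) + D(πp‖πqᶜ)`, which equals `σ_min(c)`
at `p = qᶜ`. Perturbing `qᶜ` towards `p`, the KL terms are `O(ε²)` while `Λ` is affine, so the
minimality of `qᶜ` forces `Λ(p) = σ_min(c)`. Splitting `p₀` into its island conditionals gives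
`Λ(p₀) = Σ_c p₀(c) σ_min(c)`, and `D = K - S` turns this into both identities. -/

open Finset Function Matrix Set Filter Topology

universe u v

section Divergence

variable {X : Type*} [Fintype X]

theorem sub_le_mul_log_div_s12 {a b : ℝ} (ha : 0 ≤ a) (hb : 0 < b) :
    a - b ≤ a * Real.log (a / b) := by
  have := Real.self_sub_one_le_mul_log (div_nonneg ha hb.le)
  calc a - b = b * (a / b - 1) := by field_simp
    _ ≤ b * (a / b * Real.log (a / b)) := by gcongr
    _ = a * Real.log (a / b) := by field_simp

theorem mul_log_div_le {a b : ℝ} (ha : 0 ≤ a) (hb : 0 < b) :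
    a * Real.log (a / b) ≤ (a - b) ^ 2 / b + (a - b) := by
  rcases ha.eq_or_lt with rfl | ha
  · rw [zero_sub, neg_sq, sq, mul_self_div_self]
    simp
  calc a * Real.log (a / b) ≤ a * (a / b - 1) := by
        gcongr; exact Real.log_le_sub_one_of_pos (by positivity)
    _ = (a - b) ^ 2 / b + (a - b) := by field_simp; ring

theorem klDiv'_nonneg {p q : X → ℝ} (hp : ∀ x, 0 ≤ p x) (hq : ∀ x, 0 ≤ q x)
    (hsum : ∑ x, p x = ∑ x, q x) (hpq : support p ⊆ support q) : 0 ≤ klDiv' p q := by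
  have hterm : ∀ x, p x - q x ≤ p x * Real.log (p x / q x) := fun x => by
    by_cases hqx : q x = 0
    · simp [hqx, notMem_support.mp fun h => hpq h hqx]
    · exact sub_le_mul_log_div_s12 (hp x) ((hq x).lt_of_ne' hqx)
  have : ∑ x, (p x - q x) ≤ klDiv' p q := sum_le_sum fun x _ => hterm x
  rwa [sum_sub_distrib, hsum, sub_self] at this

theorem klDiv'_le_sum_sq_div {p q : X → ℝ} (hp : ∀ x, 0 ≤ p x) (hq : ∀ x, 0 ≤ q x)
    (hsum : ∑ x, p x = ∑ x, q x) (hpq : support p ⊆ support q) :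
    klDiv' p q ≤ ∑ x, (p x - q x) ^ 2 / q x := by
  have hterm : ∀ x, p x * Real.log (p x / q x) ≤ (p x - q x) ^ 2 / q x + (p x - q x) :=
    fun x => by
      by_cases hqx : q x = 0
      · simp [hqx, notMem_support.mp fun h => hpq h hqx]
      · exact mul_log_div_le (hp x) ((hq x).lt_of_ne' hqx)
  calc klDiv' p q ≤ ∑ x, ((p x - q x) ^ 2 / q x + (p x - q x)) := sum_le_sum fun x _ => hterm x
    _ = ∑ x, (p x - q x) ^ 2 / q x := by rw [sum_add_distrib, sum_sub_distrib, hsum]; ring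

theorem klDiv'_eq_crossEnt_sub_shannonH {p q : X → ℝ} (hpq : support p ⊆ support q) :
    klDiv' p q = crossEnt p q - shannonH p := by
  unfold klDiv' crossEnt shannonH
  rw [neg_sub_neg, ← sum_sub_distrib]
  refine sum_congr rfl fun x _ => ?_
  by_cases hpx : p x = 0
  · simp [hpx]
  · rw [Real.log_div hpx (hpq hpx)]; ring

@[simp] theorem klDiv'_self (p : X → ℝ) : klDiv' p p = 0 :=
  sum_eq_zero fun x _ => by by_cases h : p x = 0 <;> simp [h]

theorem crossEnt_eq_sub_log {s q q' : X → ℝ} {a : ℝ} (hs : ∑ x, s x = 1) (ha : 0 < a)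
    (hq' : support s ⊆ support q') (hq : ∀ x ∈ support s, q x = a * q' x) :
    crossEnt s q = crossEnt s q' - Real.log a := by
  have hterm : ∀ x, s x * Real.log (q x) = Real.log a * s x + s x * Real.log (q' x) := fun x => by
    by_cases hsx : s x = 0
    · simp [hsx]
    · rw [hq x hsx, Real.log_mul ha.ne' (hq' hsx)]; ring
  simp only [crossEnt, hterm, sum_add_distrib, ← mul_sum, hs]
  ring

theorem crossEnt_sum {ι : Type*} (I : Finset ι) (c : ι → ℝ) (ρ : ι → X → ℝ) (q : X → ℝ) :
    crossEnt (∑ i ∈ I, c i • ρ i) q = ∑ i ∈ I, c i * crossEnt (ρ i) q := by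
  simp only [crossEnt, Finset.sum_apply, Pi.smul_apply, smul_eq_mul, sum_mul, mul_neg, mul_sum]
  rw [sum_comm, sum_neg_distrib]
  simp only [mul_assoc]

end Divergence

section Pushforward

variable {X : Type*} [Fintype X] {π : Matrix X X ℝ}

theorem vecMul_nonneg (hπ : ∀ x y, 0 ≤ π x y) {s : X → ℝ} (hs : ∀ x, 0 ≤ s x) (y : X) :
    0 ≤ (s ᵥ* π) y :=
  sum_nonneg fun x _ => mul_nonneg (hs x) (hπ x y)

theorem sum_vecMul_of_sum_row_eq_one (hπrow : ∀ x, ∑ y, π x y = 1) (s : X → ℝ) :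
    ∑ y, (s ᵥ* π) y = ∑ x, s x := by
  simp only [vecMul, dotProduct]
  rw [sum_comm]
  simp [← mul_sum, hπrow]

theorem IsDist.vecMul (hπ : ∀ x y, 0 ≤ π x y) (hπrow : ∀ x, ∑ y, π x y = 1) {s : X → ℝ}
    (hs : IsDist s) : IsDist (s ᵥ* π) :=
  ⟨vecMul_nonneg hπ hs.1, by rw [sum_vecMul_of_sum_row_eq_one hπrow, hs.2]⟩

theorem exists_ne_zero_of_vecMul_ne_zero {s : X → ℝ} {y : X} (h : (s ᵥ* π) y ≠ 0) :
    ∃ x, s x ≠ 0 ∧ π x y ≠ 0 := by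
  obtain ⟨x, -, hx⟩ := exists_ne_zero_of_sum_ne_zero h
  exact ⟨x, left_ne_zero_of_mul hx, right_ne_zero_of_mul hx⟩

theorem support_vecMul_subset (hπ : ∀ x y, 0 ≤ π x y) {s q : X → ℝ} (hq : ∀ x, 0 ≤ q x)
    (hsq : support s ⊆ support q) : support (s ᵥ* π) ⊆ support (q ᵥ* π) := fun y hy => by
  obtain ⟨x, hsx, hπx⟩ := exists_ne_zero_of_vecMul_ne_zero hy
  have hpos : 0 < q x * π x y := mul_pos ((hq x).lt_of_ne' (hsq hsx)) ((hπ x y).lt_of_ne' hπx)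
  exact (hpos.trans_le (single_le_sum (fun x _ => mul_nonneg (hq x) (hπ x y)) (mem_univ x))).ne'

end Pushforward

section Islands

variable {X : Type*} {π : Matrix X X ℝ}

theorem mem_islandOf_of_ne_zero (hπ : ∀ x y, 0 ≤ π x y) {r x x' y : X}
    (hx : x ∈ islandOf π r) (hxy : π x y ≠ 0) (hx'y : π x' y ≠ 0) : x' ∈ islandOf π r :=
  .trans _ _ _ (.rel _ _ ⟨y, (hπ x' y).lt_of_ne' hx'y, (hπ x y).lt_of_ne' hxy⟩) hx

theorem sum_mul_apply_eq_of_mem_islandOf {R : Finset X} {qc : X → X → ℝ} (w : X → ℝ)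
    (hR : ∀ x, ∃! r, r ∈ R ∧ x ∈ islandOf π r)
    (hqc : ∀ r ∈ R, ∀ x, qc r x ≠ 0 → x ∈ islandOf π r) {r x : X} (hr : r ∈ R)
    (hx : x ∈ islandOf π r) : ∑ r' ∈ R, w r' * qc r' x = w r * qc r x :=
  sum_eq_single_of_mem r hr fun r' hr' hne => by
    by_contra h
    exact hne ((hR x).unique ⟨hr', hqc r' hr' x (right_ne_zero_of_mul h)⟩ ⟨hr, hx⟩)

/-- Every state feeding `y` lies in the island of any one of them, so `q ᵥ* π` at `y` only
sees `q` on that island. -/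
theorem vecMul_apply_eq_of_mem_islandOf [Fintype X] (hπ : ∀ x y, 0 ≤ π x y) {q q' : X → ℝ}
    {a : ℝ} {r : X} (hq : ∀ x ∈ islandOf π r, q x = a * q' x) {x₀ y : X} (hx₀ : x₀ ∈ islandOf π r)
    (hx₀y : π x₀ y ≠ 0) : (q ᵥ* π) y = a * (q' ᵥ* π) y := by
  simp only [vecMul, dotProduct, mul_sum]
  refine sum_congr rfl fun x _ => ?_
  by_cases hxy : π x y = 0
  · simp [hxy]
  · rw [hq x (mem_islandOf_of_ne_zero hπ hx₀ hx₀y hxy), mul_assoc]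

theorem support_subset_sum_mul_of_islandOf [Fintype X]
    {R : Finset X} {qc : X → X → ℝ} {w : X → ℝ} (hR : ∀ x : X, ∃! r, r ∈ R ∧ x ∈ islandOf π r)
    (hqc_supp : ∀ r ∈ R, ∀ x, qc r x ≠ 0 → x ∈ islandOf π r) (hw : ∀ r ∈ R, 0 < w r)
    {p₀ : X → ℝ} (hp₀ : ∀ x, 0 ≤ p₀ x)
    (hp₀qc : ∀ r ∈ R, 0 < ∑ x, (islandOf π r).indicator p₀ x →
      ∀ x ∈ islandOf π r, qc r x = 0 → p₀ x = 0) :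
    support p₀ ⊆ support fun x => ∑ r ∈ R, w r * qc r x := fun x hx => by
  obtain ⟨r, ⟨hr, hxr⟩, -⟩ := hR x
  have hmass : 0 < ∑ x, (islandOf π r).indicator p₀ x :=
    ((hp₀ x).lt_of_ne' hx).trans_le <| (indicator_of_mem hxr p₀).symm.trans_le <|
      single_le_sum (fun x _ => indicator_nonneg (fun x _ => hp₀ x) x) (mem_univ x)
  rw [mem_support, sum_mul_apply_eq_of_mem_islandOf w hR hqc_supp hr hxr]
  exact mul_ne_zero (hw r hr).ne' fun h => hx (hp₀qc r hr hmass x hxr h)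

end Islands

section Combinations

variable {X : Type*} [Fintype X]

def PreservesDistCombinations (F : (X → ℝ) → ℝ) : Prop :=
  ∀ {ι : Type u} (I : Finset ι) (c : ι → ℝ) (ρ : ι → X → ℝ), (∀ i ∈ I, IsDist (ρ i)) →
    IsDist (∑ i ∈ I, c i • ρ i) → F (∑ i ∈ I, c i • ρ i) = ∑ i ∈ I, c i * F (ρ i)

theorem PreservesDistCombinations.segment {F : (X → ℝ) → ℝ}
    (hF : PreservesDistCombinations.{u} F) {q s : X → ℝ} (hq : IsDist q) (hs : IsDist s) {ε : ℝ}
    (hε : IsDist ((1 - ε) • q + ε • s)) : F ((1 - ε) • q + ε • s) = (1 - ε) * F q + ε * F s := by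
  have := hF {.up false, .up true} (fun i : ULift.{u} Bool => if i.down then ε else 1 - ε)
    (fun i => if i.down then s else q) (by simp [hq, hs]) (by simpa using hε)
  simpa using this

theorem IsDist.eventually_segment {q s : X → ℝ} (hq : IsDist q) (hs : IsDist s)
    (hsq : support s ⊆ support q) : ∀ᶠ ε in 𝓝 (0 : ℝ), IsDist ((1 - ε) • q + ε • s) := by
  have hnonneg : ∀ x, ∀ᶠ ε in 𝓝 (0 : ℝ), 0 ≤ (1 - ε) * q x + ε * s x := fun x => by
    by_cases hqx : q x = 0
    · have hsx : s x = 0 := notMem_support.mp fun h => hsq h hqx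
      exact Eventually.of_forall fun ε => by simp [hqx, hsx]
    · have hcont : Continuous fun ε : ℝ => (1 - ε) * q x + ε * s x := by fun_prop
      have hlim : Tendsto (fun ε : ℝ => (1 - ε) * q x + ε * s x) (𝓝 0) (𝓝 (q x)) := by
        simpa using hcont.tendsto 0
      exact (hlim.eventually (lt_mem_nhds ((hq.1 x).lt_of_ne' hqx))).mono fun _ h => h.le
  filter_upwards [eventually_all.2 hnonneg] with ε hε
  exact ⟨fun x => by simpa using hε x, by simp [sum_add_distrib, ← mul_sum, hq.2, hs.2]⟩

theorem eq_zero_of_eventually_nonneg_mul_add_sq {B C : ℝ}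
    (h : ∀ᶠ ε in 𝓝 (0 : ℝ), 0 ≤ ε * B + C * ε ^ 2) : B = 0 := by
  have hmin : IsLocalMin (fun ε => ε * B + C * ε ^ 2) 0 := by
    simpa [IsLocalMin, IsMinFilter] using h
  have hderiv : HasDerivAt (fun ε => ε * B + C * ε ^ 2) B 0 := by
    simpa using ((hasDerivAt_id' (0 : ℝ)).mul_const B).fun_add
      ((hasDerivAt_pow 2 (0 : ℝ)).const_mul C)
  exact hmin.hasDerivAt_eq_zero hderiv

/-- First variation at a constrained minimizer `q` of `σ`: the `O(ε²)` bound on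
`D((1-ε)q + εs ‖ q)` leaves only the linear term of `Λ`, which must then vanish. -/
theorem eq_of_isMinOn_of_le_add_klDiv' {Λ σ : (X → ℝ) → ℝ} {q : X → ℝ} (hq : IsDist q)
    (hΛ : PreservesDistCombinations.{u} Λ)
    (hmin : ∀ s, IsDist s → support s ⊆ support q → σ q ≤ σ s)
    (hσΛ : ∀ s, IsDist s → support s ⊆ support q → σ s ≤ Λ s + klDiv' s q)
    (hΛq : Λ q = σ q) {s : X → ℝ} (hs : IsDist s) (hsq : support s ⊆ support q) :
    Λ s = σ q := by
  set C := ∑ x, (s x - q x) ^ 2 / q x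
  suffices Λ s - Λ q = 0 by linarith
  refine eq_zero_of_eventually_nonneg_mul_add_sq (C := C) ?_
  filter_upwards [hq.eventually_segment hs hsq] with ε hε
  have hεq : support ((1 - ε) • q + ε • s) ⊆ support q := fun x hx hqx => hx <| by
    simp [hqx, notMem_support.mp fun h => hsq h hqx]
  have hD : klDiv' ((1 - ε) • q + ε • s) q ≤ C * ε ^ 2 := by
    refine (klDiv'_le_sum_sq_div hε.1 hq.1 (by rw [hε.2, hq.2]) hεq).trans_eq ?_
    simp only [C, sum_mul]
    refine sum_congr rfl fun x _ => ?_
    simp only [Pi.add_apply, Pi.smul_apply, smul_eq_mul]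
    ring
  have := (hmin _ hε hεq).trans (hσΛ _ hε hεq)
  rw [hΛ.segment hq hs hε] at this
  nlinarith

end Combinations

section Residual

variable {X : Type u} [Fintype X] {π : Matrix X X ℝ} {Q σ : (X → ℝ) → ℝ}

noncomputable def residualEP (Q : (X → ℝ) → ℝ) (π : Matrix X X ℝ) (q s : X → ℝ) : ℝ :=
  Q s - (crossEnt s q - crossEnt (s ᵥ* π) (q ᵥ* π))

theorem PreservesDistCombinations.residualEP (hQ : PreservesDistCombinations.{v} Q)
    (q : X → ℝ) : PreservesDistCombinations.{v} (residualEP Q π q) := by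
  intro ι I c ρ hρ hs
  simp only [_root_.residualEP, hQ I c ρ hρ hs, sum_vecMul, smul_vecMul, crossEnt_sum,
    ← sum_sub_distrib, ← mul_sub]

theorem residualEP_eq_of_support_subset (hπ : ∀ x y, 0 ≤ π x y) (hπrow : ∀ x, ∑ y, π x y = 1)
    (hbal : ∀ s, IsDist s → σ s = Q s + shannonH (s ᵥ* π) - shannonH s)
    {q q' : X → ℝ} {a : ℝ} {r : X} (ha : 0 < a) (hq' : IsDist q')
    (hq'r : support q' ⊆ islandOf π r) (hq : ∀ x ∈ islandOf π r, q x = a * q' x)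
    {s : X → ℝ} (hs : IsDist s) (hsq : support s ⊆ support q') :
    residualEP Q π q s = σ s - klDiv' s q' + klDiv' (s ᵥ* π) (q' ᵥ* π) := by
  have hpush := support_vecMul_subset hπ hq'.1 hsq
  have hcross : crossEnt s q = crossEnt s q' - Real.log a :=
    crossEnt_eq_sub_log hs.2 ha hsq fun x hx => hq x (hq'r (hsq hx))
  have hcross_push : crossEnt (s ᵥ* π) (q ᵥ* π) = crossEnt (s ᵥ* π) (q' ᵥ* π) - Real.log a := by
    refine crossEnt_eq_sub_log (hs.vecMul hπ hπrow).2 ha hpush fun y hy => ?_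
    obtain ⟨x, hsx, hπx⟩ := exists_ne_zero_of_vecMul_ne_zero hy
    exact vecMul_apply_eq_of_mem_islandOf hπ hq (hq'r (hsq hsx)) hπx
  rw [residualEP, hcross, hcross_push, klDiv'_eq_crossEnt_sub_shannonH hsq,
    klDiv'_eq_crossEnt_sub_shannonH hpush, hbal s hs]
  ring

theorem residualEP_eq_of_isMinOn (hπ : ∀ x y, 0 ≤ π x y) (hπrow : ∀ x, ∑ y, π x y = 1)
    (hbal : ∀ s, IsDist s → σ s = Q s + shannonH (s ᵥ* π) - shannonH s)
    (hQ : PreservesDistCombinations.{u} Q)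
    {q q' : X → ℝ} {a : ℝ} {r : X} (ha : 0 < a) (hq' : IsDist q')
    (hq'r : support q' ⊆ islandOf π r) (hq : ∀ x ∈ islandOf π r, q x = a * q' x)
    (hmin : ∀ s, IsDist s → support s ⊆ islandOf π r → σ q' ≤ σ s)
    {s : X → ℝ} (hs : IsDist s) (hsq : support s ⊆ support q') :
    residualEP Q π q s = σ q' := by
  have hformula := fun s (hs : IsDist s) (hsq : support s ⊆ support q') =>
    residualEP_eq_of_support_subset hπ hπrow hbal ha hq' hq'r hq hs hsq
  refine eq_of_isMinOn_of_le_add_klDiv' hq' (hQ.residualEP q)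
    (fun s hs hsq => hmin s hs (hsq.trans hq'r)) (fun s hs hsq => ?_) ?_ hs hsq
  · have := klDiv'_nonneg (vecMul_nonneg hπ hs.1) (vecMul_nonneg hπ hq'.1)
      (by rw [(hs.vecMul hπ hπrow).2, (hq'.vecMul hπ hπrow).2]) (support_vecMul_subset hπ hq'.1 hsq)
    linarith [hformula s hs hsq]
  · simp [hformula q' hq' subset_rfl]

end Residual

theorem sum_indicator_apply_of_existsUnique {ι α M : Type*} [AddCommMonoid M] {R : Finset ι}
    {S : ι → Set α} {x : α} (hx : ∃! r, r ∈ R ∧ x ∈ S r) (f : α → M) :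
    ∑ r ∈ R, (S r).indicator f x = f x := by
  obtain ⟨r, ⟨hr, hxr⟩, huniq⟩ := hx
  rw [sum_eq_single_of_mem r hr fun r' hr' hne => indicator_of_notMem
    (fun hxr' => hne (huniq r' ⟨hr', hxr'⟩)) f, indicator_of_mem hxr]

theorem isDist_inv_smul_indicator {X : Type*} [Fintype X] {p : X → ℝ} (hp : ∀ x, 0 ≤ p x)
    {S : Set X} (hS : ∑ x, S.indicator p x ≠ 0) :
    IsDist ((∑ x, S.indicator p x)⁻¹ • S.indicator p) := by
  refine ⟨fun x => mul_nonneg (inv_nonneg.2 (sum_nonneg fun y _ => ?_)) ?_, ?_⟩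
  · exact indicator_nonneg (fun y _ => hp y) y
  · exact indicator_nonneg (fun y _ => hp y) x
  · simp only [Pi.smul_apply, smul_eq_mul, ← mul_sum]
    exact inv_mul_cancel₀ hS

theorem residualEP_eq_sum_islandOf {X : Type u} [Fintype X] {π : Matrix X X ℝ}
    {Q σ : (X → ℝ) → ℝ} (hπ : ∀ x y, 0 ≤ π x y) (hπrow : ∀ x, ∑ y, π x y = 1)
    (hbal : ∀ s, IsDist s → σ s = Q s + shannonH (s ᵥ* π) - shannonH s)
    (hQ : PreservesDistCombinations.{u} Q) {R : Finset X} {qc : X → X → ℝ} {w : X → ℝ}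
    (hR : ∀ x : X, ∃! r, r ∈ R ∧ x ∈ islandOf π r)
    (hqc_dist : ∀ r ∈ R, IsDist (qc r))
    (hqc_supp : ∀ r ∈ R, ∀ x, qc r x ≠ 0 → x ∈ islandOf π r)
    (hqc_min : ∀ r ∈ R, ∀ s : X → ℝ, IsDist s →
      (∀ x, s x ≠ 0 → x ∈ islandOf π r) → σ (qc r) ≤ σ s)
    (hw : ∀ r ∈ R, 0 < w r) {p₀ : X → ℝ} (hp₀ : IsDist p₀)
    (hp₀qc : ∀ r ∈ R, 0 < ∑ x, (islandOf π r).indicator p₀ x →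
      ∀ x ∈ islandOf π r, qc r x = 0 → p₀ x = 0) :
    residualEP Q π (fun x => ∑ r ∈ R, w r * qc r x) p₀ =
      ∑ r ∈ R, (∑ x, (islandOf π r).indicator p₀ x) * σ (qc r) := by
  set m : X → ℝ := fun r => ∑ x, (islandOf π r).indicator p₀ x
  set ρ : X → X → ℝ := fun r => (m r)⁻¹ • (islandOf π r).indicator p₀
  have hind : ∀ r x, 0 ≤ (islandOf π r).indicator p₀ x :=
    fun r => indicator_nonneg fun x _ => hp₀.1 x
  set R' : Finset X := {r ∈ R | m r ≠ 0} with hR'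
  have hdecomp : p₀ = ∑ r ∈ R', m r • ρ r := by
    ext x
    rw [Finset.sum_apply, hR', sum_filter_of_ne fun r _ h => ?_,
      ← sum_indicator_apply_of_existsUnique (hR x) p₀]
    · refine sum_congr rfl fun r _ => ?_
      by_cases hmr : m r = 0
      · have := (sum_eq_zero_iff_of_nonneg fun x _ => hind r x).1 hmr x (mem_univ x)
        simp [this, hmr]
      · simp [ρ, ← mul_assoc, mul_inv_cancel₀ hmr]
    · rintro hmr
      simp [hmr] at h
  have hρ : ∀ r ∈ R', IsDist (ρ r) := fun r hr =>
    isDist_inv_smul_indicator hp₀.1 (mem_filter.1 hr).2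
  have hρqc : ∀ r ∈ R', support (ρ r) ⊆ support (qc r) := fun r hr x hx hqx => by
    obtain ⟨hrR, hmr⟩ := mem_filter.1 hr
    have hind_ne : (islandOf π r).indicator p₀ x ≠ 0 := right_ne_zero_of_mul hx
    have hxr := mem_of_indicator_ne_zero hind_ne
    rw [indicator_of_mem hxr] at hind_ne
    have hmass : 0 < m r := (sum_nonneg fun x _ => hind r x).lt_of_ne' hmr
    exact hind_ne (hp₀qc r hrR hmass x hxr hqx)
  calc residualEP Q π (fun x => ∑ r ∈ R, w r * qc r x) p₀
      = ∑ r ∈ R', m r * residualEP Q π (fun x => ∑ r ∈ R, w r * qc r x) (ρ r) := by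
        conv_lhs => rw [hdecomp]
        exact hQ.residualEP _ _ _ _ hρ (hdecomp ▸ hp₀)
    _ = ∑ r ∈ R', m r * σ (qc r) := sum_congr rfl fun r hr => by
        obtain ⟨hrR, -⟩ := mem_filter.1 hr
        rw [residualEP_eq_of_isMinOn hπ hπrow hbal hQ (hw r hrR) (hqc_dist r hrR)
          (hqc_supp r hrR) (fun x hx => sum_mul_apply_eq_of_mem_islandOf w hR hqc_supp hrR hx)
          (hqc_min r hrR) (hρ r hr) (hρqc r hr)]
    _ = ∑ r ∈ R, m r * σ (qc r) := sum_filter_of_ne fun r _ h => left_ne_zero_of_mul h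

section MasterEquation

variable {X : Type*} [Fintype X]

section LinftyOpNorm

attribute [local instance] Matrix.linftyOpNormedAddCommGroup

theorem masterEq_eqOn {W : ℝ → Matrix X X ℝ} {a b : ℝ}
    (hW : ∀ x x', ContinuousOn (fun t => W t x x') (Icc a b)) {f g : ℝ → X → ℝ}
    (hf : ∀ t ∈ Icc a b, HasDerivWithinAt f (W t *ᵥ f t) (Icc a b) t)
    (hg : ∀ t ∈ Icc a b, HasDerivWithinAt g (W t *ᵥ g t) (Icc a b) t) (ha : f a = g a) :
    EqOn f g (Icc a b) := by
  obtain ⟨C, hC⟩ : ∃ C, ∀ t ∈ Icc a b, ‖W t‖ ≤ C := isCompact_Icc.exists_bound_of_continuousOn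
    (continuousOn_pi.2 fun x => continuousOn_pi.2 (hW x))
  have hlip : ∀ t ∈ Ico a b, LipschitzOnWith C.toNNReal (W t *ᵥ ·) univ := fun t ht =>
    LipschitzWith.lipschitzOnWith <| LipschitzWith.of_dist_le_mul fun v v' => by
      rw [dist_eq_norm, dist_eq_norm, ← mulVec_sub]
      exact (linfty_opNorm_mulVec _ _).trans <| mul_le_mul_of_nonneg_right
        ((hC t (Ico_subset_Icc_self ht)).trans (Real.le_coe_toNNReal C)) (norm_nonneg _)
  have hright : ∀ {h : ℝ → X → ℝ}, (∀ t ∈ Icc a b, HasDerivWithinAt h (W t *ᵥ h t) (Icc a b) t) →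
      ∀ t ∈ Ico a b, HasDerivWithinAt h (W t *ᵥ h t) (Ici t) t := fun hh t ht =>
    (hh t (Ico_subset_Icc_self ht)).mono_of_mem_nhdsWithin (Icc_mem_nhdsGE_of_mem ht)
  exact ODE_solution_unique_of_mem_Icc_right hlip (HasDerivWithinAt.continuousOn hf) (hright hf)
    (fun _ _ => mem_univ _) (HasDerivWithinAt.continuousOn hg) (hright hg) (fun _ _ => mem_univ _)
    ha

end LinftyOpNorm

theorem eqOn_solution_sum {W : ℝ → Matrix X X ℝ}
    (hW : ∀ x x', ContinuousOn (fun t => W t x x') (Icc 0 1)) {P : (X → ℝ) → ℝ → X → ℝ}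
    (hP0 : ∀ p, IsDist p → P p 0 = p)
    (hode : ∀ p, IsDist p → ∀ t ∈ Icc (0 : ℝ) 1, ∀ x,
      HasDerivWithinAt (fun s => P p s x) (∑ x', W t x x' * P p t x') (Icc 0 1) t)
    {ι : Type*} (I : Finset ι) (c : ι → ℝ) (ρ : ι → X → ℝ) (hρ : ∀ i ∈ I, IsDist (ρ i))
    (hs : IsDist (∑ i ∈ I, c i • ρ i)) :
    EqOn (P (∑ i ∈ I, c i • ρ i)) (∑ i ∈ I, c i • P (ρ i)) (Icc 0 1) := by
  refine masterEq_eqOn hW (fun t ht => hasDerivWithinAt_pi.2 (hode _ hs t ht))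
    (fun t ht => ?_) ?_
  · rw [Finset.sum_apply, mulVec_sum]
    simp only [Pi.smul_apply, mulVec_smul]
    exact HasDerivWithinAt.sum fun i hi =>
      (hasDerivWithinAt_pi.2 (hode _ (hρ i hi) t ht)).const_smul (c i)
  · rw [hP0 _ hs, Finset.sum_apply]
    exact sum_congr rfl fun i hi => by rw [Pi.smul_apply, hP0 _ (hρ i hi)]

theorem efRate_sum [DecidableEq X] (W : ℝ → X → X → ℝ) {ι : Type*} (I : Finset ι) (c : ι → ℝ)
    (p : ι → ℝ → X → ℝ) (t : ℝ) :
    efRate W (∑ i ∈ I, c i • p i) t = ∑ i ∈ I, c i * efRate W (p i) t := by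
  have hterm : ∀ x x', (if x = x' then 0 else
      W t x x' * (∑ i ∈ I, c i • p i) t x' * Real.log (W t x x' / W t x' x)) =
      ∑ i ∈ I, c i *
        (if x = x' then 0 else W t x x' * p i t x' * Real.log (W t x x' / W t x' x)) := by
    intro x x'
    split_ifs
    · simp
    · simp only [Finset.sum_apply, Pi.smul_apply, smul_eq_mul, mul_sum, sum_mul]
      exact sum_congr rfl fun i _ => by ring
  simp only [efRate, hterm, mul_sum]
  exact (sum_congr rfl fun x _ => Finset.sum_comm).trans Finset.sum_comm

theorem efRate_congr [DecidableEq X] (W : ℝ → X → X → ℝ) {p p' : ℝ → X → ℝ} {t : ℝ}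
    (h : p t = p' t) : efRate W p t = efRate W p' t := by
  simp only [efRate, h]

theorem preservesDistCombinations_of_eq_integral_efRate [DecidableEq X] {W : ℝ → X → X → ℝ}
    (hW : ∀ x x', ContinuousOn (fun t => W t x x') (Icc 0 1)) {P : (X → ℝ) → ℝ → X → ℝ}
    (hP0 : ∀ p, IsDist p → P p 0 = p)
    (hode : ∀ p, IsDist p → ∀ t ∈ Icc (0 : ℝ) 1, ∀ x,
      HasDerivWithinAt (fun s => P p s x) (∑ x', W t x x' * P p t x') (Icc 0 1) t)
    {Q : (X → ℝ) → ℝ} (hQint : ∀ p, IsDist p → IntervalIntegrable (efRate W (P p)) volume 0 1)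
    (hQ : ∀ p, IsDist p → Q p = ∫ t in (0 : ℝ)..1, efRate W (P p) t) :
    PreservesDistCombinations.{v} Q := by
  intro ι I c ρ hρ hs
  have hflow : ∀ t ∈ Set.uIcc (0 : ℝ) 1, efRate W (P (∑ i ∈ I, c i • ρ i)) t =
      ∑ i ∈ I, c i * efRate W (P (ρ i)) t := fun t ht => by
    rw [Set.uIcc_of_le zero_le_one] at ht
    rw [efRate_congr W (eqOn_solution_sum hW hP0 hode I c ρ hρ hs ht), efRate_sum]
  rw [hQ _ hs, intervalIntegral.integral_congr hflow,
    intervalIntegral.integral_finsetSum fun i hi => (hQint _ (hρ i hi)).const_mul (c i)]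
  exact sum_congr rfl fun i hi => by rw [intervalIntegral.integral_const_mul, hQ _ (hρ i hi)]

end MasterEquation

section EntropyBalance

variable {X : Type*} [Fintype X]

theorem sum_mulVec_eq_zero {A : Matrix X X ℝ} (hA : ∀ x', ∑ x, A x x' = 0) (v : X → ℝ) :
    ∑ x, (A *ᵥ v) x = 0 := by
  simp only [mulVec, dotProduct]
  rw [sum_comm]
  simp [← sum_mul, hA]

theorem epRate_sub_efRate [DecidableEq X] {W : ℝ → X → X → ℝ} {p : ℝ → X → ℝ} {t : ℝ}
    (hoff : ∀ x x', x ≠ x' → 0 ≤ W t x x') (hcol : ∀ x', ∑ x, W t x x' = 0)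
    (hsym : ∀ x x', x ≠ x' → (0 < W t x x' ↔ 0 < W t x' x)) (hp : ∀ x, 0 < p t x) :
    epRate W p t - efRate W p t = -∑ x, (Real.log (p t x) + 1) * (W t *ᵥ p t) x := by
  have hterm : ∀ x x', ((if x = x' then 0 else
      W t x x' * p t x' * Real.log ((W t x x' * p t x') / (W t x' x * p t x))) -
      if x = x' then 0 else W t x x' * p t x' * Real.log (W t x x' / W t x' x)) =
      W t x x' * (p t x' * Real.log (p t x')) - Real.log (p t x) * (W t x x' * p t x') := by
    intro x x'
    by_cases hxx : x = x'
    · subst hxx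
      rw [if_pos rfl, if_pos rfl]
      ring
    rw [if_neg hxx, if_neg hxx]
    rcases (hoff x x' hxx).eq_or_lt with hW | hW
    · simp [← hW]
    have hW' := (hsym x x' hxx).1 hW
    rw [Real.log_div (by positivity [hp x']) (by positivity [hp x]), Real.log_div hW.ne' hW'.ne',
      Real.log_mul hW.ne' (hp x').ne', Real.log_mul hW'.ne' (hp x).ne']
    ring
  rw [epRate, efRate, ← sum_sub_distrib]
  simp_rw [← sum_sub_distrib, hterm]
  simp only [sum_sub_distrib, ← mul_sum]
  have h1 := sum_mulVec_eq_zero hcol (fun x => p t x * Real.log (p t x))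
  have h2 := sum_mulVec_eq_zero hcol (p t)
  simp only [mulVec, dotProduct] at h1 h2 ⊢
  rw [h1]
  simp only [add_mul, one_mul, sum_add_distrib, h2]
  ring

theorem integral_epRate_sub_integral_efRate [DecidableEq X] {W : ℝ → X → X → ℝ}
    {p : ℝ → X → ℝ} {a b : ℝ} (hab : a ≤ b)
    (hoff : ∀ t ∈ Icc a b, ∀ x x', x ≠ x' → 0 ≤ W t x x')
    (hcol : ∀ t ∈ Icc a b, ∀ x', ∑ x, W t x x' = 0)
    (hsym : ∀ t ∈ Icc a b, ∀ x x', x ≠ x' → (0 < W t x x' ↔ 0 < W t x' x))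
    (hode : ∀ t ∈ Icc a b, ∀ x,
      HasDerivWithinAt (fun s => p s x) (∑ x', W t x x' * p t x') (Icc a b) t)
    (hpos : ∀ t ∈ Ioo a b, ∀ x, 0 < p t x)
    (hep : IntervalIntegrable (epRate W p) volume a b)
    (hef : IntervalIntegrable (efRate W p) volume a b) :
    (∫ t in a..b, epRate W p t) - ∫ t in a..b, efRate W p t =
      shannonH (p b) - shannonH (p a) := by
  rw [← intervalIntegral.integral_sub hep hef]
  refine intervalIntegral.integral_eq_sub_of_hasDerivAt_of_le (f := fun t => shannonH (p t)) hab ?_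
    (fun t ht => ?_) (hep.sub hef)
  · exact (continuousOn_finsetSum _ fun x _ => Real.continuous_mul_log.comp_continuousOn
      (HasDerivWithinAt.continuousOn (hode · · x))).neg
  · have htIcc := Ioo_subset_Icc_self ht
    have hderiv : ∀ x, HasDerivAt (fun s => p s x * Real.log (p s x))
        ((Real.log (p t x) + 1) * (W t *ᵥ p t) x) t := fun x => by
      have := (Real.hasDerivAt_mul_log (hpos t ht x).ne').comp t
        ((hode t htIcc x).hasDerivAt (Icc_mem_nhds ht.1 ht.2))
      exact this
    rw [epRate_sub_efRate (hoff t htIcc) (hcol t htIcc) (hsym t htIcc) (hpos t ht)]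
    exact (HasDerivAt.fun_sum fun x _ => hderiv x).neg

end EntropyBalance

/-- the total entropy flow incurred in applying `π` to `p₀`
equals Landauer cost plus mismatch cost plus residual entropy production,
which also equals the drop in cross entropy plus the residual entropy
production. -/
theorem entropy_flow_decomposition
    {X : Type*} [Fintype X] [DecidableEq X]
    (W : ℝ → X → X → ℝ) (P : (X → ℝ) → ℝ → X → ℝ)
    (Q σ : (X → ℝ) → ℝ)
    (π : X → X → ℝ) (R : Finset X) (qc : X → X → ℝ) (w : X → ℝ)
    (hWcont : ∀ x x', ContinuousOn (fun t => W t x x') (Set.Icc 0 1))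
    (hWoff : ∀ t ∈ Set.Icc (0:ℝ) 1, ∀ x x', x ≠ x' → 0 ≤ W t x x')
    (hWcol : ∀ t ∈ Set.Icc (0:ℝ) 1, ∀ x', ∑ x, W t x x' = 0)
    (hWsym : ∀ t ∈ Set.Icc (0:ℝ) 1, ∀ x x', x ≠ x' → (0 < W t x x' ↔ 0 < W t x' x))
    (hP0 : ∀ p₀, IsDist p₀ → P p₀ 0 = p₀)
    (hode : ∀ p₀, IsDist p₀ → ∀ t ∈ Set.Icc (0:ℝ) 1, ∀ x,
      HasDerivWithinAt (fun s => P p₀ s x) (∑ x', W t x x' * P p₀ t x')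
        (Set.Icc 0 1) t)
    (hpos : ∀ p₀, IsDist p₀ → ∀ t ∈ Set.Ioc (0:ℝ) 1, ∀ x, 0 < P p₀ t x)
    (hQint : ∀ p₀, IsDist p₀ → IntervalIntegrable (efRate W (P p₀)) volume 0 1)
    (hQ : ∀ p₀, IsDist p₀ → Q p₀ = ∫ t in (0:ℝ)..1, efRate W (P p₀) t)
    (hσint : ∀ p₀, IsDist p₀ → IntervalIntegrable (epRate W (P p₀)) volume 0 1)
    (hσ : ∀ p₀, IsDist p₀ → σ p₀ = ∫ t in (0:ℝ)..1, epRate W (P p₀) t)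
    (hπ : ∀ x y, 0 ≤ π x y) (hπrow : ∀ x, ∑ y, π x y = 1)
    (hπP : ∀ p₀, IsDist p₀ → ∀ y, (∑ x, π x y * p₀ x) = P p₀ 1 y)
    (hR : ∀ x : X, ∃! r, r ∈ R ∧ x ∈ islandOf π r)
    (hqc_dist : ∀ r ∈ R, IsDist (qc r))
    (hqc_supp : ∀ r ∈ R, ∀ x, qc r x ≠ 0 → x ∈ islandOf π r)
    (hqc_min : ∀ r ∈ R, ∀ s : X → ℝ, IsDist s →
      (∀ x, s x ≠ 0 → x ∈ islandOf π r) → σ (qc r) ≤ σ s)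
    (hw : ∀ r ∈ R, 0 < w r) :
    ∀ p₀ : X → ℝ, IsDist p₀ →
      (∀ r ∈ R, 0 < ∑ x, (islandOf π r).indicator p₀ x →
        ∀ x ∈ islandOf π r, qc r x = 0 → p₀ x = 0) →
      Q p₀ =
        (shannonH p₀ - shannonH (fun y => ∑ x, π x y * p₀ x))
        + (klDiv' p₀ (fun x => ∑ r ∈ R, w r * qc r x)
            - klDiv' (fun y => ∑ x, π x y * p₀ x)
                (fun y => ∑ x, π x y * (∑ r ∈ R, w r * qc r x)))
        + ∑ r ∈ R, (∑ x, (islandOf π r).indicator p₀ x) * σ (qc r)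
      ∧
      Q p₀ =
        (crossEnt p₀ (fun x => ∑ r ∈ R, w r * qc r x)
          - crossEnt (fun y => ∑ x, π x y * p₀ x)
              (fun y => ∑ x, π x y * (∑ r ∈ R, w r * qc r x)))
        + ∑ r ∈ R, (∑ x, (islandOf π r).indicator p₀ x) * σ (qc r) := by
  intro p₀ hp₀ hp₀qc
  have hvecMul : ∀ s : X → ℝ, (fun y => ∑ x, π x y * s x) = s ᵥ* π := fun s =>
    funext fun y => sum_congr rfl fun x _ => mul_comm _ _
  have hbal : ∀ s, IsDist s → σ s = Q s + shannonH (s ᵥ* π) - shannonH s := fun s hs => by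
    have := integral_epRate_sub_integral_efRate zero_le_one hWoff hWcol hWsym (hode s hs)
      (fun t ht => hpos s hs t (Ioo_subset_Ioc_self ht)) (hσint s hs) (hQint s hs)
    rw [hP0 s hs, ← funext (hπP s hs), hvecMul, ← hσ s hs, ← hQ s hs] at this
    linarith
  have hres := residualEP_eq_sum_islandOf hπ hπrow hbal
    (preservesDistCombinations_of_eq_integral_efRate hWcont hP0 hode hQint hQ)
    hR hqc_dist hqc_supp hqc_min hw hp₀ hp₀qc
  have hsupp := support_subset_sum_mul_of_islandOf hR hqc_supp hw hp₀.1 hp₀qc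
  have hq : ∀ x, 0 ≤ ∑ r ∈ R, w r * qc r x := fun x =>
    sum_nonneg fun r hr => mul_nonneg (hw r hr).le ((hqc_dist r hr).1 x)
  simp only [hvecMul]
  unfold residualEP at hres
  rw [klDiv'_eq_crossEnt_sub_shannonH hsupp,
    klDiv'_eq_crossEnt_sub_shannonH (support_vecMul_subset hπ hq hsupp)]
  constructor <;> linarith
end
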